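/- arXiv:2204.10719 — 4 statements merged into one kernel-verified Lean document; each statement's English description precedes it below -/
import Mathlib

section
/- Let q > m ≥ 1 be coprime integers with q > 2. There is no matrix M ∈ GL(2, ℤ) such that M·(q, −m)ᵀ = (q, m−q)ᵀ and (Mᵀ)⁻¹·(q+m, m)ᵀ = (2q−m, q−m)ᵀ. -/
theorem no_goeritz_matrix_K1_K2 (q m : ℤ) (hm : 1 ≤ m) (hmq : m < q)
    (hq : 2 < q) (hcop : IsCoprime q m) :
    ¬∃ M : Matrix (Fin 2) (Fin 2) ℤ, (M.det = 1 ∨ M.det = -1) ∧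
      M.mulVec ![q, -m] = ![q, m - q] ∧
      (M.transpose)⁻¹.mulVec ![q + m, m] = ![2 * q - m, q - m] := by
  rintro ⟨M, hdet, h1, h2⟩
  set a := M 0 0 with ha
  set b := M 0 1 with hb
  set c := M 1 0 with hc
  set d := M 1 1 with hd
  -- det of transpose is a unit
  have hdetT : IsUnit M.transpose.det := by
    rw [Matrix.det_transpose]
    rcases hdet with h | h <;> simp [h]
  -- recover the transpose equation
  have h2' : M.transpose.mulVec ![2 * q - m, q - m] = ![q + m, m] := by
    have := congrArg (M.transpose.mulVec) h2
    rw [Matrix.mulVec_mulVec, Matrix.mul_nonsing_inv _ hdetT,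
      Matrix.one_mulVec] at this
    exact this.symm
  have e1 : a * q + b * (-m) = q := by
    have := congrFun h1 0
    simpa [Matrix.mulVec, dotProduct, Fin.sum_univ_two] using this
  have e2 : c * q + d * (-m) = m - q := by
    have := congrFun h1 1
    simpa [Matrix.mulVec, dotProduct, Fin.sum_univ_two] using this
  have e3 : a * (2 * q - m) + c * (q - m) = q + m := by
    have := congrFun h2' 0
    simpa [Matrix.mulVec, dotProduct, Fin.sum_univ_two,
      Matrix.transpose_apply] using this
  have hdet' : a * d - b * c = M.det := by
    rw [Matrix.det_fin_two]
  rcases hdet with h | h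
  · -- det = 1 : a * (q^2+q*m-m^2) = q^2 + m^2
    have e5 : a * d - b * c = 1 := by rw [hdet', h]
    have key : a * (q ^ 2 + q * m - m ^ 2) = q ^ 2 + m ^ 2 := by
      linear_combination (c * (q - m)) * e1 - (a * (q - m)) * e2 + q * e3 -
        (m * (q - m)) * e5
    have hN : 0 < q ^ 2 + q * m - m ^ 2 := by nlinarith
    have ha1 : a = 1 := by nlinarith [sq_nonneg (q - m), sq_nonneg (q + 3 * m)]
    rw [ha1, one_mul] at key
    have hq2m : q = 2 * m := by
      have : q * m = 2 * m ^ 2 := by linarith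
      have hm0 : m ≠ 0 := by omega
      have := mul_right_cancel₀ hm0 (by linarith : q * m = (2 * m) * m)
      exact this
    -- coprimality forces m = 1, q = 2, contradicting q > 2
    obtain ⟨u, v, huv⟩ := hcop
    rw [hq2m] at huv
    have : m * (u * 2 + v) = 1 := by ring_nf; linarith [huv]
    have hm1 : m = 1 := Int.eq_one_of_mul_eq_one_right (by omega) this
    omega
  · -- det = -1 : (a - 1) * (q^2+q*m-m^2) = q*m, impossible
    have e5 : a * d - b * c = -1 := by rw [hdet', h]
    have key : a * (q ^ 2 + q * m - m ^ 2) = q ^ 2 + 2 * q * m - m ^ 2 := by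
      linear_combination (c * (q - m)) * e1 - (a * (q - m)) * e2 + q * e3 -
        (m * (q - m)) * e5
    have key' : (a - 1) * (q ^ 2 + q * m - m ^ 2) = q * m := by
      linear_combination key
    have hN : q * m < q ^ 2 + q * m - m ^ 2 := by nlinarith
    have hqm : 0 < q * m := by positivity
    rcases le_or_gt a 1 with h' | h'
    · nlinarith
    · nlinarith
end

section
/- Let q > 2 and 1 ≤ m < q with gcd(q, m) = 1. Then there is no M ∈ GL(2, ℤ) with M·(q, −m)ᵀ = (q, m−q)ᵀ and (Mᵀ)⁻¹·(q+m, m)ᵀ = (2q−m, q−m)ᵀ; equivalently, the equation m − lq² = (lm + Δ)(q − m) has no solution with l ∈ ℤ and Δ = ±1. -/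
private lemma key_no_sol (q m : ℤ) (hq : 2 < q) (hm : 1 ≤ m) (hmq : m < q)
    (hcop : IsCoprime q m) (l Δ : ℤ) (hΔ : Δ = 1 ∨ Δ = -1)
    (heq : l * (q ^ 2 + m * q - m ^ 2) = m - Δ * (q - m)) : False := by
  have hD : 2 * q < q ^ 2 + m * q - m ^ 2 := by nlinarith
  rcases hΔ with rfl | rfl
  · -- l * D = 2m - q
    rcases lt_trichotomy l 0 with hl | rfl | hl
    · have hl' : l ≤ -1 := by omega
      nlinarith
    · -- 0 = 2m - q, so q = 2m, m ∣ q, coprime ⇒ m = 1 ⇒ q = 2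
      have hq2m : q = 2 * m := by linarith [heq]
      have : IsUnit m := hcop.isUnit_of_dvd' ⟨2, by linarith⟩ dvd_rfl
      rw [Int.isUnit_iff] at this
      omega
    · have hl' : 1 ≤ l := hl
      nlinarith
  · -- l * D = q
    rcases lt_trichotomy l 0 with hl | rfl | hl
    · have hl' : l ≤ -1 := by omega
      nlinarith
    · simp at heq; omega
    · have hl' : 1 ≤ l := hl
      nlinarith

theorem no_goeritz_matrix_and_no_solution (q m : ℤ) (hq : 2 < q)
    (hm : 1 ≤ m) (hmq : m < q) (hcop : IsCoprime q m) :
    (¬∃ M : Matrix (Fin 2) (Fin 2) ℤ, (M.det = 1 ∨ M.det = -1) ∧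
        M.mulVec ![q, -m] = ![q, m - q] ∧
        (M.transpose)⁻¹.mulVec ![q + m, m] = ![2 * q - m, q - m]) ∧
    (¬∃ l Δ : ℤ, (Δ = 1 ∨ Δ = -1) ∧
        m - l * q ^ 2 = (l * m + Δ) * (q - m)) := by
  have hq0 : (q : ℤ) ≠ 0 := by omega
  have hm0 : (m : ℤ) ≠ 0 := by omega
  constructor
  · rintro ⟨M, hdet, hv, hw⟩
    set a := M 0 0 with ha
    set b := M 0 1 with hb
    set c := M 1 0 with hc
    set d := M 1 1 with hd
    have h0 : a * q + b * (-m) = q := by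
      have := congrFun hv 0
      simpa [Matrix.mulVec, dotProduct, Fin.sum_univ_two] using this
    have h1 : c * q + d * (-m) = m - q := by
      have := congrFun hv 1
      simpa [Matrix.mulVec, dotProduct, Fin.sum_univ_two] using this
    -- invertibility
    have hu : IsUnit M.det := by
      rcases hdet with h | h <;> simp [h]
    have huT : IsUnit M.transpose.det := by rwa [Matrix.det_transpose]
    have hinv : M.transpose * (M.transpose)⁻¹ = 1 := Matrix.mul_nonsing_inv _ huT
    have hw' : M.transpose.mulVec ![2 * q - m, q - m] = ![q + m, m] := by
      calc M.transpose.mulVec ![2 * q - m, q - m]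
          = M.transpose.mulVec ((M.transpose)⁻¹.mulVec ![q + m, m]) := by rw [hw]
        _ = (M.transpose * (M.transpose)⁻¹).mulVec ![q + m, m] := by
            rw [Matrix.mulVec_mulVec]
        _ = ![q + m, m] := by rw [hinv, Matrix.one_mulVec]
    have h2 : a * (2 * q - m) + c * (q - m) = q + m := by
      have := congrFun hw' 0
      simpa [Matrix.mulVec, dotProduct, Fin.sum_univ_two, Matrix.transpose_apply,
        ← ha, ← hb, ← hc, ← hd] using this
    -- extract l : q ∣ b
    have hdvdb : q ∣ b := by
      refine hcop.dvd_of_dvd_mul_right ⟨a - 1, ?_⟩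
      ring_nf
      linarith [h0]
    obtain ⟨l, hbl⟩ := hdvdb
    have hal : a = l * m + 1 := by
      have : (a - (l * m + 1)) * q = 0 := by rw [hbl] at h0; ring_nf; linarith [h0]
      have := mul_eq_zero.mp this
      rcases this with h | h
      · linarith
      · exact absurd h hq0
    -- extract h : q ∣ d + 1
    have hdvdd : q ∣ d + 1 := by
      refine hcop.dvd_of_dvd_mul_right ⟨c + 1, ?_⟩
      ring_nf
      linarith [h1]
    obtain ⟨k, hdk⟩ := hdvdd
    have hck : c = k * m - 1 := by
      have : (c - (k * m - 1)) * q = 0 := by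
        have hd' : d = q * k - 1 := by linarith [hdk]
        rw [hd'] at h1; ring_nf; linarith [h1]
      rcases mul_eq_zero.mp this with h | h
      · linarith
      · exact absurd h hq0
    have hd' : d = k * q - 1 := by linear_combination hdk
    -- E3 gives l*(2q-m)+k*(q-m) = 1
    have e3 : l * (2 * q - m) + k * (q - m) = 1 := by
      have : (l * (2 * q - m) + k * (q - m) - 1) * m = 0 := by
        rw [hal, hck] at h2; ring_nf; linarith [h2]
      rcases mul_eq_zero.mp this with h | h
      · linarith
      · exact absurd h hm0
    -- det equation
    have hdetval : M.det = a * d - b * c := by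
      rw [Matrix.det_fin_two]
    have e2 : l * (q - m) + k * q - 1 = M.det := by
      rw [hdetval, hal, hbl, hck, hd']; ring
    refine key_no_sol q m hq hm hmq hcop l M.det hdet ?_
    nlinarith [e3, e2]
  · rintro ⟨l, Δ, hΔ, heq⟩
    refine key_no_sol q m hq hm hmq hcop l Δ hΔ ?_
    nlinarith [heq]
end

section
/- With q, m coprime, 2 ≤ m < q, d = ⌊q/m⌋, r = q mod m, z_n = ⌈(n+1)r/m⌉ for −1 ≤ n ≤ m−1, and p_n = d + z_n − z_{n−1}: one has p_0 = d+1, p_{m−1} = d, and p_n = p_{m−1−n} for all 1 ≤ n ≤ m−2. -/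
private lemma ceil_div_eq (a m : ℤ) (hm : 0 < m) :
    ⌈((a : ℤ) : ℚ) / (m : ℚ)⌉ = -((-a) / m) := by
  have hmn : ((m : ℤ) : ℚ) = ((m.toNat : ℕ) : ℚ) := by
    exact_mod_cast congrArg (Int.cast : ℤ → ℚ) (Int.toNat_of_nonneg hm.le).symm
  have h1 : ⌈((a : ℤ) : ℚ) / (m : ℚ)⌉ = -⌊((-a : ℤ) : ℚ) / (m : ℚ)⌋ := by
    rw [show ((a : ℤ) : ℚ) / (m : ℚ) = -(((-a : ℤ) : ℚ) / (m : ℚ)) by push_cast; ring,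
      Int.ceil_neg]
  rw [h1, hmn, Rat.floor_intCast_div_natCast, Int.toNat_of_nonneg hm.le]

private lemma neg_ediv_eq (a m : ℤ) (hm : 0 < m) (h : ¬ m ∣ a) :
    (-a) / m = -(a / m) - 1 := by
  have hmod : a % m ≠ 0 := fun hc => h (Int.dvd_of_emod_eq_zero hc)
  have h0 : 0 ≤ a % m := Int.emod_nonneg a hm.ne'
  have h1 : a % m < m := Int.emod_lt_of_pos a hm
  have h2 : a % m + m * (a / m) = a := Int.emod_add_mul_ediv a m
  exact ((Int.ediv_emod_unique (a := -a) (b := m) (r := m - a % m)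
    (q := -(a / m) - 1) hm).2 ⟨by linarith, by omega, by omega⟩).1

theorem p_sequence_near_palindrome (q m d r : ℤ) (hm : 2 ≤ m) (hmq : m < q)
    (hcop : IsCoprime q m) (hd : d = q / m) (hr : r = q % m)
    (z p : ℤ → ℤ)
    (hz : ∀ n : ℤ, z n = ⌈(((n + 1) * r : ℤ) : ℚ) / (m : ℚ)⌉)
    (hp : ∀ n : ℤ, p n = d + (z n - z (n - 1))) :
    p 0 = d + 1 ∧ p (m - 1) = d ∧
      ∀ n : ℤ, 1 ≤ n → n ≤ m - 2 → p n = p (m - 1 - n) := by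
  have hm0 : 0 < m := by linarith
  have hz' : ∀ n : ℤ, z n = -((-((n + 1) * r)) / m) := fun n => by
    rw [hz n, ceil_div_eq _ _ hm0]
  -- r bounds
  have hr0 : 0 ≤ r := hr ▸ Int.emod_nonneg q hm0.ne'
  have hrm : r < m := hr ▸ Int.emod_lt_of_pos q hm0
  -- r coprime to m
  have hcr : IsCoprime r m := by
    have : r = q + m * (-(q / m)) := by
      rw [hr, Int.emod_def]; ring
    rw [this]
    exact hcop.add_mul_left_left _
  have hrne : r ≠ 0 := by
    intro h0
    have hdq : m ∣ q := Int.dvd_of_emod_eq_zero (by omega)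
    have := Int.isUnit_iff.1 (hcop.isUnit_of_dvd' hdq dvd_rfl)
    omega
  have hr1 : 1 ≤ r := by omega
  -- non-divisibility
  have ndvd : ∀ k : ℤ, 1 ≤ k → k < m → ¬ m ∣ k * r := by
    intro k hk1 hkm hdvd
    have : m ∣ k := (hcr.symm).dvd_of_dvd_mul_right hdvd
    have := Int.le_of_dvd (by omega) this
    omega
  have hdivr : r / m = 0 := Int.ediv_eq_zero_of_lt hr0 hrm
  -- key ediv shift: ((a - m*r)/m) = a/m - r
  have shift : ∀ a : ℤ, (a + (-r) * m) / m = a / m + (-r) :=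
    fun a => Int.add_mul_ediv_right a (-r) hm0.ne'
  refine ⟨?_, ?_, ?_⟩
  · -- p 0 = d + 1
    have hz0 : z 0 = 1 := by
      rw [hz' 0]
      have : ¬ m ∣ r := by
        intro hdvd
        exact ndvd 1 le_rfl (by omega) (by simpa using hdvd)
      rw [show -((0 + 1) * r) = -r by ring, neg_ediv_eq r m hm0 this, hdivr]
      ring
    have hzm1 : z (-1) = 0 := by
      rw [hz' (-1)]; norm_num
    rw [hp 0, show (0:ℤ) - 1 = -1 by ring, hz0, hzm1]; ring
  · -- p (m-1) = d
    have hzm1 : z (m - 1) = r := by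
      rw [hz' (m - 1)]
      rw [show -((m - 1 + 1) * r) = 0 + (-r) * m by ring, shift 0]
      simp
    have hzm2 : z (m - 2) = r := by
      rw [hz' (m - 2)]
      rw [show -((m - 2 + 1) * r) = r + (-r) * m by ring, shift r, hdivr]
      ring
    rw [hp (m - 1), show m - 1 - 1 = m - 2 by ring, hzm1, hzm2]; ring
  · intro n hn1 hn2
    have hzn : z n = (n + 1) * r / m + 1 := by
      rw [hz' n, neg_ediv_eq _ _ hm0 (ndvd (n + 1) (by omega) (by omega))]; ring
    have hzn1 : z (n - 1) = n * r / m + 1 := by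
      rw [hz' (n - 1), show n - 1 + 1 = n from by ring,
        neg_ediv_eq _ _ hm0 (ndvd n hn1 (by omega))]; ring
    have hza : z (m - 1 - n) = r - n * r / m := by
      rw [hz' (m - 1 - n)]
      rw [show -((m - 1 - n + 1) * r) = n * r + (-r) * m by ring, shift (n * r)]
      ring
    have hzb : z (m - 1 - n - 1) = r - (n + 1) * r / m := by
      rw [hz' (m - 1 - n - 1)]
      rw [show -((m - 1 - n - 1 + 1) * r) = (n + 1) * r + (-r) * m by ring,
        shift ((n + 1) * r)]
      ring
    rw [hp n, hp (m - 1 - n), hzn, hzn1, hza, hzb]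
    ring
end

section
/- Let q, m be coprime with 2 ≤ m < q/2, set d = ⌊q/m⌋ (so d ≥ 2), r = q mod m, p_n = d + ⌈(n+1)r/m⌉ − ⌈nr/m⌉ for 0 ≤ n ≤ m−1; and set m̃ = q − m, d̃ = 1, r̃ = m, p̃_n = 1 + ⌈(n+1)m/(q−m)⌉ − ⌈nm/(q−m)⌉ for 0 ≤ n ≤ q−m−1. Then p̃_n = 2 exactly when n = 0 or n = p_0 + p_1 + ⋯ + p_j − (j+2) for some 0 ≤ j ≤ m−2, and p̃_n = 1 otherwise. -/
set_option maxHeartbeats 1600000 in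
theorem ptilde_two_characterization (q m d r : ℕ) (hm : 2 ≤ m)
    (hmq : 2 * m < q) (hcop : Nat.Coprime q m) (hd : d = q / m)
    (hr : r = q % m) (p ptilde : ℕ → ℤ)
    (hp : ∀ n : ℕ, p n = (d : ℤ) + ⌈(((n + 1) * r : ℕ) : ℚ) / (m : ℚ)⌉
        - ⌈((n * r : ℕ) : ℚ) / (m : ℚ)⌉)
    (hpt : ∀ n : ℕ, ptilde n = 1 + ⌈(((n + 1) * m : ℕ) : ℚ) / ((q - m : ℕ) : ℚ)⌉
        - ⌈((n * m : ℕ) : ℚ) / ((q - m : ℕ) : ℚ)⌉) :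
    ∀ n : ℕ, n ≤ q - m - 1 →
      (ptilde n = 2 ↔ (n = 0 ∨ ∃ j : ℕ, j ≤ m - 2 ∧
        (n : ℤ) = (∑ i ∈ Finset.range (j + 1), p i) - (j + 2))) ∧
      (ptilde n = 1 ∨ ptilde n = 2) := by
  have hmpos : 0 < m := by omega
  set M := q - m with hMdef
  have hMgt : m < M := by omega
  have hMpos : 0 < M := by omega
  have hqMm : q = M + m := by omega
  have hcop' : Nat.Coprime M m := by
    have h2 := hcop
    rw [hqMm] at h2
    exact (Nat.coprime_add_self_left).mp h2
  have hMQ : (0:ℚ) < (M:ℚ) := by exact_mod_cast hMpos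
  have hmQ : (0:ℚ) < (m:ℚ) := by exact_mod_cast hmpos
  have hmZ : (0:ℤ) < (m:ℤ) := by exact_mod_cast hmpos
  have hMZ : (0:ℤ) < (M:ℤ) := by exact_mod_cast hMpos
  have hmMZ : (m:ℤ) < (M:ℤ) := by exact_mod_cast hMgt
  obtain ⟨c, hcdef⟩ : ∃ c : ℕ → ℤ, c = fun n : ℕ => ⌈((n * m : ℕ) : ℚ) / (M : ℚ)⌉ := ⟨_, rfl⟩
  -- transfer lemmas for c
  have hle : ∀ (a : ℕ) (k : ℤ), c a ≤ k ↔ (a : ℤ) * m ≤ k * M := by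
    intro a k
    simp only [hcdef]
    rw [Int.ceil_le, div_le_iff₀ hMQ]
    constructor <;> intro h <;> exact_mod_cast h
  have hlt : ∀ (a : ℕ) (k : ℤ), k < c a ↔ k * M < (a : ℤ) * m := by
    intro a k
    simp only [hcdef]
    rw [Int.lt_ceil, lt_div_iff₀ hMQ]
    constructor <;> intro h <;> exact_mod_cast h
  -- transfer lemmas for ceilings with denominator m
  have hleM : ∀ (a : ℕ) (z : ℤ), ⌈((a * M : ℕ):ℚ)/(m:ℚ)⌉ ≤ z ↔ (a:ℤ) * M ≤ z * m := by
    intro a z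
    rw [Int.ceil_le, div_le_iff₀ hmQ]
    constructor <;> intro h <;> exact_mod_cast h
  have hltM : ∀ (a : ℕ) (z : ℤ), z < ⌈((a * M : ℕ):ℚ)/(m:ℚ)⌉ ↔ z * m < (a:ℤ) * M := by
    intro a z
    rw [Int.lt_ceil, lt_div_iff₀ hmQ]
    constructor <;> intro h <;> exact_mod_cast h
  -- step bounds
  have hmono : ∀ a : ℕ, c a ≤ c (a + 1) := by
    intro a
    rw [hle]
    have h1 : ((a + 1 : ℕ) : ℤ) * m ≤ c (a+1) * M := (hle (a+1) (c (a+1))).mp le_rfl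
    push_cast at h1 ⊢
    nlinarith
  have hstep : ∀ a : ℕ, c (a + 1) ≤ c a + 1 := by
    intro a
    rw [hle]
    have h1 : (a : ℤ) * m ≤ c a * M := (hle a (c a)).mp le_rfl
    push_cast
    nlinarith
  -- telescoped sum
  have hq' : q = m * d + r := by rw [hd, hr]; exact (Nat.div_add_mod q m).symm
  have hsum : ∀ k : ℕ, (∑ i ∈ Finset.range k, p i)
      = (k : ℤ) * d + ⌈((k * r : ℕ) : ℚ) / (m:ℚ)⌉ := by
    intro k
    induction k with
    | zero => simp
    | succ k ih =>
      rw [Finset.sum_range_succ, ih, hp k]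
      push_cast
      ring
  have hceilq : ∀ k : ℕ, ⌈((k * q : ℕ) : ℚ) / (m:ℚ)⌉
      = (k : ℤ) * d + ⌈((k * r : ℕ) : ℚ) / (m:ℚ)⌉ := by
    intro k
    have h1 : ((k * q : ℕ) : ℚ) / (m:ℚ) = ((k * r : ℕ) : ℚ) / (m:ℚ) + ((k * d : ℕ) : ℤ) := by
      rw [hq']
      push_cast
      field_simp
      ring
    rw [h1, Int.ceil_add_intCast]
    push_cast
    ring
  have hceilM : ∀ k : ℕ, ⌈((k * q : ℕ) : ℚ) / (m:ℚ)⌉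
      = ⌈((k * M : ℕ) : ℚ) / (m:ℚ)⌉ + (k : ℤ) := by
    intro k
    have h1 : ((k * q : ℕ) : ℚ) / (m:ℚ) = ((k * M : ℕ) : ℚ) / (m:ℚ) + ((k : ℕ) : ℤ) := by
      rw [hqMm]
      push_cast
      field_simp
    rw [h1, Int.ceil_add_intCast]
  have hS : ∀ k : ℕ, (∑ i ∈ Finset.range k, p i)
      = ⌈((k * M : ℕ) : ℚ) / (m:ℚ)⌉ + (k : ℤ) := by
    intro k
    have := hsum k
    have h1 := hceilq k
    have h2 := hceilM k
    linarith
  -- main part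
  intro n hn
  have hnM : n < M := by omega
  have hptn : ptilde n = 1 + c (n + 1) - c n := by
    simp only [hcdef]; exact hpt n
  have h1 := hmono n
  have h2 := hstep n
  constructor
  · constructor
    · -- ptilde n = 2 → characterization
      intro hpt2
      by_cases hn0 : n = 0
      · exact Or.inl hn0
      right
      have hn1 : 1 ≤ n := by omega
      have hcc : c n < c (n + 1) := by rw [hptn] at hpt2; linarith
      -- c n ≥ 1
      have hkpos : 1 ≤ c n := by
        have h4 := (hlt n 0).mpr (by nlinarith [show (1:ℤ) ≤ (n:ℤ) from by exact_mod_cast hn1, hmZ])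
        have h5 := Int.lt_iff_add_one_le.mp h4
        linarith
      have hlow : (n : ℤ) * m ≤ c n * M := (hle n (c n)).mp le_rfl
      have hup : c n * M < ((n:ℤ) + 1) * m := by
        have := (hlt (n+1) (c n)).mpr
        have h3 : c n * M < ((n+1 : ℕ):ℤ) * m := by
          by_contra hcon
          push_neg at hcon
          have h4 := (hle (n+1) (c n)).mpr hcon
          linarith
        push_cast at h3
        exact h3
      -- strictness of the lower bound
      obtain ⟨k', hk'⟩ : ∃ k' : ℕ, (k' : ℤ) = c n :=
        ⟨(c n).toNat, Int.toNat_of_nonneg (by omega)⟩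
      have hk'1 : 1 ≤ k' := by
        have h3 : (1:ℤ) ≤ (k':ℤ) := by rw [hk']; exact hkpos
        omega
      have hne : (n : ℤ) * m ≠ c n * M := by
        intro heq
        have heqN : n * m = k' * M := by
          have h3 : ((n * m : ℕ) : ℤ) = ((k' * M : ℕ) : ℤ) := by push_cast; rw [hk']; exact heq
          exact Nat.cast_inj.mp h3
        have hdvd : M ∣ n * m := ⟨k', by rw [heqN]; ring⟩
        have hdn : M ∣ n := Nat.Coprime.dvd_of_dvd_mul_right hcop' hdvd
        have := Nat.le_of_dvd (by omega) hdn
        omega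
      have hlow' : (n : ℤ) * m < c n * M := lt_of_le_of_ne hlow hne
      -- k' < m
      have hk'm : k' < m := by
        have hn1M : (n:ℤ) + 1 ≤ (M:ℤ) := by omega
        have h4 : ((n:ℤ) + 1) * m ≤ (M:ℤ) * m := mul_le_mul_of_nonneg_right hn1M (le_of_lt hmZ)
        have h5 : c n * M < (m:ℤ) * M := by rw [mul_comm (m:ℤ) (M:ℤ)]; linarith
        have hcm : c n < (m:ℤ) := lt_of_mul_lt_mul_right h5 (le_of_lt hMZ)
        have h3 : (k':ℤ) < (m:ℤ) := by rw [hk']; exact hcm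
        omega
      refine ⟨k' - 1, by omega, ?_⟩
      rw [show k' - 1 + 1 = k' from by omega]
      have hcast : ((k' - 1 : ℕ) : ℤ) = (k' : ℤ) - 1 := by omega
      rw [hcast]
      -- ceil (k' M / m) = n + 1
      have hub : ⌈((k' * M : ℕ):ℚ)/(m:ℚ)⌉ ≤ (n:ℤ) + 1 := by
        rw [hleM]
        rw [← hk'] at hup
        linarith
      have hlb : (n:ℤ) < ⌈((k' * M : ℕ):ℚ)/(m:ℚ)⌉ := by
        rw [hltM]
        rw [← hk'] at hlow'
        linarith
      have hSk := hS k'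
      linarith
    · -- characterization → ptilde n = 2
      intro hchar
      have h2goal : c n < c (n + 1) → ptilde n = 2 := by
        intro hcc
        have h4 := Int.add_one_le_iff.mpr hcc
        rw [hptn]
        linarith
      apply h2goal
      rcases hchar with hn0 | ⟨j, hj, hnval⟩
      · subst hn0
        rw [hlt]
        have hc0 : c 0 ≤ 0 := by rw [hle]; simp
        have h4 : c 0 * M ≤ 0 := mul_nonpos_of_nonpos_of_nonneg hc0 (le_of_lt hMZ)
        have h5 : (0:ℤ) < ((0 + 1 : ℕ):ℤ) * m := by push_cast; linarith
        linarith
      · -- n = ⌈(j+1)M/m⌉ - 1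
        have hSj := hS (j + 1)
        have hceq : ⌈(((j+1) * M : ℕ):ℚ)/(m:ℚ)⌉ = (n:ℤ) + 1 := by
          have : ((j:ℤ) + 2) = ((j+1 : ℕ) : ℤ) + 1 := by push_cast; ring
          rw [this] at hnval
          linarith
        have hA : ((j+1:ℕ):ℤ) * M ≤ ((n:ℤ) + 1) * m := (hleM (j+1) ((n:ℤ)+1)).mp (le_of_eq hceq)
        have hB : (n:ℤ) * m < ((j+1:ℕ):ℤ) * M := by
          have := (hltM (j+1) (n:ℤ)).mp (by rw [hceq]; linarith)
          exact this
        -- strictness of hA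
        have hA' : ((j+1:ℕ):ℤ) * M < ((n:ℤ) + 1) * m := by
          rcases lt_or_eq_of_le hA with h | h
          · exact h
          · exfalso
            have heqN : (j+1) * M = (n+1) * m := by
              have h3 : (((j+1) * M : ℕ) : ℤ) = (((n+1) * m : ℕ) : ℤ) := by
                push_cast; push_cast at h; linarith
              exact Nat.cast_inj.mp h3
            have hdvd : m ∣ (j+1) * M := ⟨n+1, by rw [heqN]; ring⟩
            have hdj : m ∣ (j+1) := Nat.Coprime.dvd_of_dvd_mul_right (Nat.coprime_comm.mp hcop') hdvd
            have := Nat.le_of_dvd (by omega) hdj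
            omega
        have hcnk : c n ≤ ((j+1:ℕ):ℤ) := by
          rw [hle]
          linarith
        rw [hlt]
        have h5 : c n * M ≤ ((j+1:ℕ):ℤ) * M := mul_le_mul_of_nonneg_right hcnk (le_of_lt hMZ)
        push_cast at h5 hA' ⊢
        linarith
  · -- ptilde n ∈ {1, 2}
    rcases eq_or_lt_of_le h1 with h3 | h3
    · left
      rw [hptn]
      linarith
    · right
      have h4 := Int.add_one_le_iff.mpr h3
      rw [hptn]
      linarith
end
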